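/- Forward direction of the SAT Reduction: let Σ = {e_1:φ_1, …, e_n:φ_n} be a finite set of formulas where each e_i is a belief atom and each φ_i is non-epistemic, let e be a belief entity not occurring in Σ, and let G be the graph with edges e ↦_G e_i for exactly the e_i occurring in Σ. If there exist a model M for G and a run r with (M,r) ⊨ e_i:φ_i for all i, then there exist a Kripke structure M' = (S, R, π) and a run r' with (M',r') ⊨ φ_i for all i, i.e. Φ = {φ_1,…,φ_n} is satisfiable over the non-epistemic fragment. -/

import Mathlib

/-- Formulas of the logic of justification graphs: ⊥, propositional variables,
implication, epistemic operator `bel A φ` (written `A:φ`) for a belief group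
`A : Finset E` of belief entities, and temporal operators next (X),
previous (P), until (U), since (S). -/
inductive JFormula (V : Type) (E : Type) : Type
  | bot  : JFormula V E
  | var  : V → JFormula V E
  | imp  : JFormula V E → JFormula V E → JFormula V E
  | bel  : Finset E → JFormula V E → JFormula V E
  | next : JFormula V E → JFormula V E
  | prev : JFormula V E → JFormula V E
  | untl : JFormula V E → JFormula V E → JFormula V E
  | snce : JFormula V E → JFormula V E → JFormula V E

namespace JFormula
variable {V E : Type}
/-- ¬φ abbreviates φ → ⊥ -/
def jneg (φ : JFormula V E) : JFormula V E := .imp φ .bot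
def jtop : JFormula V E := jneg .bot
def jor (φ ψ : JFormula V E) : JFormula V E := .imp (jneg φ) ψ
def jand (φ ψ : JFormula V E) : JFormula V E := jneg (.imp φ (jneg ψ))
def jiff (φ ψ : JFormula V E) : JFormula V E := jand (.imp φ ψ) (.imp ψ φ)
/-- finally: F φ := ⊤ U φ -/
def jF (φ : JFormula V E) : JFormula V E := .untl jtop φ
/-- globally: G φ := ¬F¬φ -/
def jG (φ : JFormula V E) : JFormula V E := jneg (jF (jneg φ))
/-- weak previous: Z φ := ¬P¬φ -/
def jZ (φ : JFormula V E) : JFormula V E := jneg (.prev (jneg φ))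
end JFormula

/-- A Kripke structure: a state space `S`, an interpretation mapping each state to
the set of propositional variables true at it, and for each belief entity an
accessibility relation.  The set of runs is the set of all functions `ℕ → S`. -/
structure Kripke (V E S : Type) where
  interp : S → Set V
  acc : E → S → S → Prop

/-- Accessibility for a belief group `A`: the intersection `⋂_{e ∈ A} ↦_e`. -/
def Kripke.accG {V E S : Type} (M : Kripke V E S) (A : Finset E) (s s' : S) : Prop :=
  ∀ e ∈ A, M.acc e s s'

/-- Satisfaction `(M, r(t)) ⊨ φ`. -/
def sat {V E S : Type} (M : Kripke V E S) : JFormula V E → (ℕ → S) → ℕ → Prop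
  | .bot, _, _ => False
  | .var q, r, t => q ∈ M.interp (r t)
  | .imp φ ψ, r, t => sat M φ r t → sat M ψ r t
  | .bel A φ, r, t => ∀ r' : ℕ → S, (∀ t' ≤ t, M.accG A (r t') (r' t')) → sat M φ r' t
  | .next φ, r, t => sat M φ r (t + 1)
  | .prev φ, r, t => 0 < t ∧ sat M φ r (t - 1)
  | .untl φ ψ, r, t => ∃ t', t ≤ t' ∧ sat M ψ r t' ∧ ∀ t'', t ≤ t'' → t'' < t' → sat M φ r t''
  | .snce φ ψ, r, t => ∃ t', t' ≤ t ∧ sat M ψ r t' ∧ ∀ t'', t' < t'' → t'' ≤ t → sat M φ r t''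

/-- A relation on `S` is serial if every state has a successor. -/
def Serial {S : Type} (rel : S → S → Prop) : Prop := ∀ s, ∃ s', rel s s'

/-- A justification graph: a finite directed acyclic graph whose nodes are the
belief entities; `comp e` is the set of direct components of `e`.  Acyclicity is
expressed by well-foundedness of the edge relation. -/
structure JustGraph (E : Type) [Fintype E] where
  comp : E → Finset E
  acyclic : WellFounded (fun f e : E => f ∈ comp e)

/-- Belief atoms are the leaf nodes of the justification graph. -/
def JustGraph.IsAtom {E : Type} [Fintype E] (G : JustGraph E) (e : E) : Prop :=
  G.comp e = ∅

/-- A model for a justification graph `G`: a Kripke structure in which every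
accessibility relation `↦_e` is serial and `↦_e ⊆ ↦_A` for every non-atomic
belief entity `e` and every nonempty subgroup `A ⊆ G(e)` of its components. -/
def IsModelFor {V E S : Type} [Fintype E] (G : JustGraph E) (M : Kripke V E S) : Prop :=
  (∀ e : E, Serial (M.acc e)) ∧
  ∀ e : E, ¬ G.IsAtom e → ∀ A : Finset E, A.Nonempty → A ⊆ G.comp e →
    ∀ s s' : S, M.acc e s s' → M.accG A s s'

/-- A formula is non-epistemic if it contains no epistemic operator `E:(·)`. -/
def NonEpistemic {V E : Type} : JFormula V E → Prop
  | .bot => True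
  | .var _ => True
  | .imp φ ψ => NonEpistemic φ ∧ NonEpistemic ψ
  | .bel _ _ => False
  | .next φ => NonEpistemic φ
  | .prev φ => NonEpistemic φ
  | .untl φ ψ => NonEpistemic φ ∧ NonEpistemic ψ
  | .snce φ ψ => NonEpistemic φ ∧ NonEpistemic ψ

/-- Satisfaction over the non-epistemic fragment, for a Kripke structure
`M' = (S, R, π)` given without accessibility relations.  Since satisfaction of a
non-epistemic formula does not refer to the accessibility relations, it is well
defined by fixing an arbitrary family of accessibility relations. -/
def NEsat {V E S : Type} (interp : S → Set V) (φ : JFormula V E) (r : ℕ → S)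
    (t : ℕ) : Prop :=
  sat ⟨interp, fun _ _ _ => True⟩ φ r t

theorem NonEpistemic.sat_iff {V E S : Type} {φ : JFormula V E} (hφ : NonEpistemic φ)
    {M M' : Kripke V E S} (hπ : M.interp = M'.interp) (r : ℕ → S) (t : ℕ) :
    sat M φ r t ↔ sat M' φ r t := by
  induction φ generalizing r t with
  | bot | var => simp only [sat, hπ]
  | bel => exact hφ.elim
  | imp φ ψ ihφ ihψ => simp only [sat, ihφ hφ.1, ihψ hφ.2]
  | next φ ih => simp only [sat, ih hφ]
  | prev φ ih => simp only [sat, ih hφ]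
  | untl φ ψ ihφ ihψ => simp only [sat, ihφ hφ.1, ihψ hφ.2]
  | snce φ ψ ihφ ihψ => simp only [sat, ihφ hφ.1, ihψ hφ.2]

theorem NonEpistemic.NEsat_of_sat {V E S : Type} {φ : JFormula V E} (hφ : NonEpistemic φ)
    {M : Kripke V E S} {r : ℕ → S} {t : ℕ} (h : sat M φ r t) : NEsat M.interp φ r t :=
  (hφ.sat_iff (M := M) (M' := ⟨M.interp, fun _ _ _ => True⟩) rfl r t).mp h

theorem IsModelFor.acc_of_mem_comp {V E S : Type} [Fintype E] {G : JustGraph E}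
    {M : Kripke V E S} (hM : IsModelFor G M) {e f : E} (hf : f ∈ G.comp e) {s s' : S}
    (h : M.acc e s s') : M.acc f s s' :=
  hM.2 e (Finset.ne_empty_of_mem hf) {f} (Finset.singleton_nonempty f)
    (Finset.singleton_subset_iff.mpr hf) s s' h f (Finset.mem_singleton_self f)

theorem sat_of_sat_bel_singleton_zero {V E S : Type} {M : Kripke V E S} {f : E}
    {φ : JFormula V E} {r r' : ℕ → S} (h : sat M (.bel {f} φ) r 0)
    (hacc : M.acc f (r 0) (r' 0)) : sat M φ r' 0 :=
  h r' fun t ht g hg => by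
    rw [Nat.le_zero.mp ht, Finset.mem_singleton.mp hg]
    exact hacc

theorem sat_reduction_forward_general {V E : Type} [Fintype E] [DecidableEq E]
    (n : ℕ) (ent : Fin n → E) (fml : Fin n → JFormula V E)
    (hne : ∀ i, NonEpistemic (fml i))
    (e : E)
    (G : JustGraph E)
    (hG : ∀ f : E, G.comp f = if f = e then Finset.image ent Finset.univ else ∅)
    (S : Type) (M : Kripke V E S) (r : ℕ → S)
    (hM : IsModelFor G M)
    (hsat : ∀ i, sat M (.bel {ent i} (fml i)) r 0) :
    ∃ (S' : Type) (interp : S' → Set V) (r' : ℕ → S'),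
      ∀ i, NEsat interp (fml i) r' 0 := by
  -- one successor of `r 0` for the parent `e` is a successor for every component `ent i`
  obtain ⟨s₀, hs₀⟩ := hM.1 e (r 0)
  refine ⟨S, M.interp, fun _ => s₀, fun i => (hne i).NEsat_of_sat ?_⟩
  have hcomp : ent i ∈ G.comp e := by simp [hG]
  exact sat_of_sat_bel_singleton_zero (hsat i) (hM.acc_of_mem_comp hcomp hs₀)

/-- Forward direction of the SAT Reduction: if `Σ = {e_1:φ_1, …, e_n:φ_n}` is
satisfiable for the justification graph `G` with edges `e ↦_G e_i`, then
`Φ = {φ_1, …, φ_n}` is satisfiable over the non-epistemic fragment. -/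
theorem sat_reduction_forward {V E : Type} [Fintype E] [DecidableEq E]
    (n : ℕ) (ent : Fin n → E) (fml : Fin n → JFormula V E)
    (hne : ∀ i, NonEpistemic (fml i))
    (e : E) (he : ∀ i, ent i ≠ e)
    (G : JustGraph E)
    (hG : ∀ f : E, G.comp f = if f = e then Finset.image ent Finset.univ else ∅)
    (S : Type) (M : Kripke V E S) (r : ℕ → S)
    (hM : IsModelFor G M)
    (hsat : ∀ i, sat M (.bel {ent i} (fml i)) r 0) :
    ∃ (S' : Type) (interp : S' → Set V) (r' : ℕ → S'),
      ∀ i, NEsat interp (fml i) r' 0 :=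
  sat_reduction_forward_general n ent fml hne e G hG S M r hM hsat
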